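/- arXiv:1410.8501 — 2 statements merged into one kernel-verified Lean document; each statement's English description precedes it below -/
import Mathlib

section
/- Two torsion-free affine connections ∇ and ∇' on a surface Σ with the same conformal structure, which are projectively equivalent (∇' = ∇ + ι(α) for some 1-form α) and both satisfy ∇g = 2β⊗g and ∇'g = 2β̂⊗g for 1-forms β, β̂, must be equal: α = 0 and ∇ = ∇'. -/
/-- The plane `ℝ²`, modelling the surface `Σ` (in a local setting every tangent space is
identified with `EuclideanSpace ℝ (Fin 2)`; vector fields are maps `E2 → E2` and a
connection is an operator on vector fields). -/
abbrev E2 := EuclideanSpace ℝ (Fin 2)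

/-- Two torsion-free affine connections `∇` and `∇'` on a surface with the same conformal
structure `[g]`, which are projectively equivalent (`∇' = ∇ + ι(α)` for a `1`-form `α`)
and satisfy `∇ g = 2β ⊗ g`, `∇' g = 2β̂ ⊗ g` for `1`-forms `β`, `β̂`, must be equal:
`α = 0` and `∇ = ∇'`.  Here `(∇_Z g)(X,Y) = Z(g(X,Y)) − g(∇_Z X, Y) − g(X, ∇_Z Y)`. -/
theorem conformal_projectively_equivalent_connections_eq
    (g : E2 → E2 → E2 → ℝ)
    (hsymm : ∀ x v w, g x v w = g x w v)
    (hlin : ∀ x w, IsLinearMap ℝ fun v => g x v w)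
    (hpos : ∀ x v, v ≠ 0 → 0 < g x v v)
    (hgsmooth : ∀ v w, ContDiff ℝ (⊤ : ℕ∞) fun x => g x v w)
    (nab nab' : (E2 → E2) → (E2 → E2) → E2 → E2)
    (α β βh : E2 → E2 → ℝ)
    (htf : ∀ X Y : E2 → E2, ContDiff ℝ (⊤ : ℕ∞) X → ContDiff ℝ (⊤ : ℕ∞) Y → ∀ x,
      nab X Y x - nab Y X x = fderiv ℝ Y x (X x) - fderiv ℝ X x (Y x))
    (htf' : ∀ X Y : E2 → E2, ContDiff ℝ (⊤ : ℕ∞) X → ContDiff ℝ (⊤ : ℕ∞) Y → ∀ x,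
      nab' X Y x - nab' Y X x = fderiv ℝ Y x (X x) - fderiv ℝ X x (Y x))
    (hconf : ∀ X Y Z : E2 → E2, ContDiff ℝ (⊤ : ℕ∞) X → ContDiff ℝ (⊤ : ℕ∞) Y → ContDiff ℝ (⊤ : ℕ∞) Z → ∀ x,
      fderiv ℝ (fun y => g y (X y) (Y y)) x (Z x)
        - g x (nab Z X x) (Y x) - g x (X x) (nab Z Y x)
        = 2 * β x (Z x) * g x (X x) (Y x))
    (hconf' : ∀ X Y Z : E2 → E2, ContDiff ℝ (⊤ : ℕ∞) X → ContDiff ℝ (⊤ : ℕ∞) Y → ContDiff ℝ (⊤ : ℕ∞) Z → ∀ x,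
      fderiv ℝ (fun y => g y (X y) (Y y)) x (Z x)
        - g x (nab' Z X x) (Y x) - g x (X x) (nab' Z Y x)
        = 2 * βh x (Z x) * g x (X x) (Y x))
    (hproj : ∀ X Y : E2 → E2, ∀ x,
      nab' X Y x = nab X Y x + α x (X x) • Y x + α x (Y x) • X x) :
    (∀ x v, α x v = 0) ∧ ∀ X Y x, nab' X Y x = nab X Y x := by

  classical
  -- basic algebraic facts about `g`
  have hadd : ∀ x u v w, g x (u + v) w = g x u w + g x v w :=
    fun x u v w => (hlin x w).map_add u v
  have hsm : ∀ x (c : ℝ) v w, g x (c • v) w = c * g x v w :=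
    fun x c v w => by simpa [smul_eq_mul] using (hlin x w).map_smul c v
  have hadd2 : ∀ x u v w, g x u (v + w) = g x u v + g x u w := fun x u v w => by
    rw [hsymm, hadd, hsymm x v u, hsymm x w u]
  have hsm2 : ∀ x (c : ℝ) u v, g x u (c • v) = c * g x u v := fun x c u v => by
    rw [hsymm, hsm, hsymm x v u]
  have hz0 : ∀ x v, g x (0 : E2) v = 0 := fun x v => (hlin x v).map_zero
  have hz0' : ∀ x v, g x v (0 : E2) = 0 := fun x v => by rw [hsymm]; exact hz0 x v
  -- the key pointwise identity obtained from constant vector fields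
  have key : ∀ x u v w, 2 * α x u * g x v w + α x v * g x u w + α x w * g x v u
      = 2 * (β x u - βh x u) * g x v w := by
    intro x u v w
    have h1 := hconf (fun _ => v) (fun _ => w) (fun _ => u)
      contDiff_const contDiff_const contDiff_const x
    have h2 := hconf' (fun _ => v) (fun _ => w) (fun _ => u)
      contDiff_const contDiff_const contDiff_const x
    rw [hproj (fun _ => u) (fun _ => v) x, hproj (fun _ => u) (fun _ => w) x] at h2
    simp only [hadd, hsm, hadd2, hsm2] at h1 h2
    linarith [h1, h2]
  -- basis vectors
  set e₁ : E2 := EuclideanSpace.single (0 : Fin 2) (1 : ℝ) with he₁def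
  set e₂ : E2 := EuclideanSpace.single (1 : Fin 2) (1 : ℝ) with he₂def
  have he₁ : e₁ ≠ 0 := by
    intro h
    have := congrArg (fun v : E2 => v 0) h
    simp [he₁def, EuclideanSpace.single_apply] at this
  have hα0 : ∀ x, α x 0 = 0 := by
    intro x
    have hk := key x e₁ 0 e₁
    simp only [hz0, hz0'] at hk
    have hp := hpos x e₁ he₁
    have : α x 0 * g x e₁ e₁ = 0 := by linarith
    exact (mul_eq_zero.mp this).resolve_right (ne_of_gt hp)
  have hγ : ∀ x u, β x u - βh x u = 2 * α x u := by
    intro x u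
    by_cases hu : u = 0
    · subst hu
      have hk := key x 0 e₁ e₁
      simp only [hz0, hz0', hα0] at hk
      have hp := hpos x e₁ he₁
      have h0 : 2 * (β x 0 - βh x 0) * g x e₁ e₁ = 0 := by linarith
      have h1 : 2 * (β x 0 - βh x 0) = 0 :=
        (mul_eq_zero.mp h0).resolve_right (ne_of_gt hp)
      rw [hα0]; linarith
    · have hk := key x u u u
      have hp := hpos x u hu
      have h0 : (2 * (β x u - βh x u) - 4 * α x u) * g x u u = 0 := by ring_nf; linarith [hk]
      have h1 := (mul_eq_zero.mp h0).resolve_right (ne_of_gt hp)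
      linarith
  -- the quadratic identity
  have E : ∀ x u v, α x u * g x v v = α x v * g x u v := by
    intro x u v
    have hk := key x u v v
    rw [hγ] at hk
    rw [hsymm x v u] at hk
    linarith [hk]
  have hα : ∀ x v, α x v = 0 := by
    intro x v
    set a := α x e₁ with ha_def
    set b := α x e₂ with hb_def
    set p := g x e₁ e₁ with hp_def
    set q := g x e₁ e₂ with hq_def
    set r := g x e₂ e₂ with hr_def
    have hp : 0 < p := hpos x e₁ he₁
    have he₂ : e₂ ≠ 0 := by
      intro h
      have := congrArg (fun v : E2 => v 1) h
      simp [he₂def, EuclideanSpace.single_apply] at this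
    have hr : 0 < r := hpos x e₂ he₂
    have hE1 : a * r = b * q := E x e₁ e₂
    have hE2 : b * p = a * q := by
      have := E x e₂ e₁
      rwa [hsymm x e₂ e₁, ← hq_def] at this
    -- strict Cauchy–Schwarz via the vector z = q•e₁ - p•e₂
    set z : E2 := q • e₁ + (-p) • e₂ with hz_def
    have hzne : z ≠ 0 := by
      intro h
      have := congrArg (fun v : E2 => v 1) h
      simp [hz_def, he₁def, he₂def, EuclideanSpace.single_apply] at this
      exact ne_of_gt hp this
    have hgz : g x z z = p * (p * r - q * q) := by
      rw [hz_def]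
      simp only [hadd, hsm, hadd2, hsm2]
      rw [← hp_def, ← hq_def, ← hr_def, hsymm x e₂ e₁, ← hq_def]
      ring
    have hCS : 0 < p * r - q * q := by
      have := hpos x z hzne
      rw [hgz] at this
      nlinarith
    have hab : a * b = 0 := by
      have h3 : a * b * (p * r - q * q) = 0 := by linear_combination b * p * hE1 + b * q * hE2
      exact (mul_eq_zero.mp h3).resolve_right (ne_of_gt hCS)
    have ha : a = 0 := by
      rcases mul_eq_zero.mp hab with h | h
      · exact h
      · have : a * r = 0 := by rw [hE1, h]; ring
        exact (mul_eq_zero.mp this).resolve_right (ne_of_gt hr)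
    have : α x v * p = 0 := by
      have hE3 := E x v e₁
      rw [← hp_def] at hE3
      rw [hE3, ← ha_def, ha]; ring
    exact (mul_eq_zero.mp this).resolve_right (ne_of_gt hp)
  refine ⟨hα, fun X Y x => ?_⟩
  rw [hproj, hα, hα, zero_smul, zero_smul, add_zero, add_zero]
end

section
/- Let G ⊂ SL(3,ℝ) be the subgroup of matrices b⋊a = [[ (det a)^{-1}, b ], [0, a]] with a ∈ GL⁺(2,ℝ) and b a row vector in ℝ_2. Then the map (b⋊a) ↦ j²₀ f_{a,b}, where f_{a,b}(x) = (det a) a·x / (1 + (det a) b·x), is a group homomorphism into 2-jets at 0 of local diffeomorphisms of ℝ² fixing 0; equivalently, f_{a,b} ∘ f_{a',b'} and f_{a'',b''} with a'' , b'' determined by the matrix product (b⋊a)(b'⋊a') agree to second order at 0. -/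
/-!
`f_{a,b}` is the action of the matrix `b⋊a` on `ℝP²` in the affine chart `x ↦ [1 : x]`, since
`(b⋊a) (1, x) = ((det a)⁻¹ + b·x, a·x)`. Hence `f_{a,b} ∘ f_{a',b'} = f_{a'',b''}` exactly wherever
`1 + (det a') b'·x ≠ 0`, in particular on a neighbourhood of `0`, so all their jets at `0` agree.
-/

/-- The fractional-linear map `f_{a,b} : x ↦ (det a) a·x / (1 + (det a) b·x)` on `ℝ²`,
for `a` a `2×2` matrix and `b` a row vector. -/
noncomputable def flt (a : Matrix (Fin 2) (Fin 2) ℝ) (b : Fin 2 → ℝ)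
    (x : Fin 2 → ℝ) : Fin 2 → ℝ :=
  (1 + a.det * (dotProduct b x))⁻¹ • (a.det • a.mulVec x)

open Matrix Filter Topology

theorem flt_apply (a : Matrix (Fin 2) (Fin 2) ℝ) (b x : Fin 2 → ℝ) :
    flt a b x = (a.det / (1 + a.det * b ⬝ᵥ x)) • a *ᵥ x := by
  rw [flt, smul_smul, div_eq_inv_mul]

-- `A⁻¹` is junk at `A = 0`, where both sides vanish.
theorem flt_comp_scalar_identity {A A' p q : ℝ} (hD : 1 + A' * q ≠ 0) :
    A / (1 + A * (A' / (1 + A' * q) * p)) * (A' / (1 + A' * q)) =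
      A * A' / (1 + A * A' * (A⁻¹ * q + p)) := by
  rcases eq_or_ne A 0 with rfl | hA
  · simp
  · field_simp
    ring

theorem flt_comp_apply (a a' : Matrix (Fin 2) (Fin 2) ℝ) (b b' x : Fin 2 → ℝ)
    (hx : 1 + a'.det * b' ⬝ᵥ x ≠ 0) :
    flt a b (flt a' b' x) = flt (a * a') (a.det⁻¹ • b' + b ᵥ* a') x := by
  rw [flt_apply a', flt_apply a, flt_apply (a * a'), dotProduct_smul, mulVec_smul,
    mulVec_mulVec, smul_smul, dotProduct_mulVec, det_mul, add_dotProduct, smul_dotProduct,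
    smul_eq_mul, smul_eq_mul, flt_comp_scalar_identity hx]

theorem flt_comp_eventuallyEq_nhds_zero (a a' : Matrix (Fin 2) (Fin 2) ℝ) (b b' : Fin 2 → ℝ) :
    flt a b ∘ flt a' b' =ᶠ[𝓝 0] flt (a * a') (a.det⁻¹ • b' + b ᵥ* a') := by
  have hD : ∀ᶠ x in 𝓝 (0 : Fin 2 → ℝ), 1 + a'.det * b' ⬝ᵥ x ≠ 0 :=
    (continuous_const.add (continuous_const.mul (continuous_const.dotProduct continuous_id)))
      |>.continuousAt.eventually_ne (by simp)
  filter_upwards [hD] with x hx using flt_comp_apply a a' b b' x hx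

theorem fractional_linear_two_jet_hom_general
    (a a' : Matrix (Fin 2) (Fin 2) ℝ) (b b' : Fin 2 → ℝ) :
    ∀ n : ℕ, n ≤ 2 →
      iteratedFDeriv ℝ n (flt a b ∘ flt a' b') 0 =
        iteratedFDeriv ℝ n (flt (a * a') (a.det⁻¹ • b' + Matrix.vecMul b a')) 0 :=
  fun n _ => ((flt_comp_eventuallyEq_nhds_zero a a' b b').iteratedFDeriv ℝ n).eq_of_nhds

/-- The map `b⋊a ↦ j²₀ f_{a,b}` is a group homomorphism into `2`-jets at `0` of local
diffeomorphisms of `ℝ²` fixing `0`:  `f_{a,b} ∘ f_{a',b'}` and `f_{a'',b''}`, where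
`a'' = a a'` and `b'' = (det a)⁻¹ b' + b a'` are determined by the matrix product
`(b⋊a)(b'⋊a')`, agree to second order at `0` (equal iterated derivatives of order
`n ≤ 2` at `0`). -/
theorem fractional_linear_two_jet_hom
    (a a' : Matrix (Fin 2) (Fin 2) ℝ) (b b' : Fin 2 → ℝ)
    (ha : 0 < a.det) (ha' : 0 < a'.det) :
    ∀ n : ℕ, n ≤ 2 →
      iteratedFDeriv ℝ n (flt a b ∘ flt a' b') 0 =
        iteratedFDeriv ℝ n (flt (a * a') (a.det⁻¹ • b' + Matrix.vecMul b a')) 0 :=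
  fractional_linear_two_jet_hom_general a a' b b'
end
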